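/- Let n, m ≥ 1, let H be a Hermitian complex matrix indexed by Fin n × Fin m, let f : ℝ → ℝ be a continuous convex function, and let a be an n×n complex matrix with Tr(a* a) = 1. Then the matrix K := Tr₁((a* ⊗ 1) H (a ⊗ 1)) is Hermitian, and Tr f(K) ≤ Tr(a* · (Tr₂ f(H)) · a). -/

import Mathlib

/-!
Write `K = ∑ᵢ Wᵢᴴ H Wᵢ` with `Wᵢ = (a ⊗ 1)(eᵢ ⊗ ·)`, a family with `∑ᵢ Wᵢᴴ Wᵢ = Tr(aᴴa) • 1 = 1`.
Let `(u_P, λ_P)` be an eigenbasis of `H` and `(v_j, μ_j)` one of `K`. Then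
`μ_j = ∑_{i,P} |⟨u_P, Wᵢ v_j⟩|² λ_P` is a convex combination of the `λ_P`, while the `j`-th diagonal
entry of `∑ᵢ Wᵢᴴ f(H) Wᵢ` in the basis `(v_j)` is the same combination of the `f(λ_P)`. Scalar
Jensen bounds `f(μ_j)` by the latter; summing over `j` gives
`Tr f(K) ≤ Tr (∑ᵢ Wᵢᴴ f(H) Wᵢ) = Tr ((a ⊗ 1)ᴴ f(H) (a ⊗ 1)) = Tr (aᴴ Tr₂(f(H)) a)`.
-/

open Matrix
open scoped ComplexOrder

/-- The partial trace over the first factor: `(Tr₁ X)_{j,l} = ∑ᵢ X_{(i,j),(i,l)}`. -/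
noncomputable def ptrace1 {n m : ℕ} (X : Matrix (Fin n × Fin m) (Fin n × Fin m) ℂ) :
    Matrix (Fin m) (Fin m) ℂ :=
  Matrix.of fun j l => ∑ i : Fin n, X (i, j) (i, l)

/-- The partial trace over the second factor: `(Tr₂ X)_{i,k} = ∑ⱼ X_{(i,j),(k,j)}`. -/
noncomputable def ptrace2 {n m : ℕ} (X : Matrix (Fin n × Fin m) (Fin n × Fin m) ℂ) :
    Matrix (Fin n) (Fin n) ℂ :=
  Matrix.of fun i k => ∑ j : Fin m, X (i, j) (k, j)

/-- `a ⊗ 1`, with entries `(a ⊗ 1)_{(i,j),(k,l)} = a_{i,k} δ_{j,l}`. -/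
def tensorOne {n m : ℕ} (a : Matrix (Fin n) (Fin n) ℂ) :
    Matrix (Fin n × Fin m) (Fin n × Fin m) ℂ :=
  Matrix.of fun p q => a p.1 q.1 * (if p.2 = q.2 then 1 else 0)

/-- `g` applied to a Hermitian matrix via the functional calculus
(`g(A) = ∑ᵢ g(λᵢ) Pᵢ` for the spectral decomposition `A = ∑ᵢ λᵢ Pᵢ`). -/
noncomputable def matFun {k : Type*} [Fintype k] [DecidableEq k]
    {A : Matrix k k ℂ} (hA : A.IsHermitian) (g : ℝ → ℝ) : Matrix k k ℂ := hA.cfc g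

section Jensen

variable {𝕜 : Type*} [RCLike 𝕜] {n p ι : Type*} [Fintype n] [DecidableEq n]

lemma Matrix.conjTranspose_mul_diagonal_mul_apply_self (N : Matrix n p 𝕜) (d : n → ℝ) (j : p) :
    (Nᴴ * diagonal (fun i => (d i : 𝕜)) * N) j j = ((∑ i, d i * ‖N i j‖ ^ 2 : ℝ) : 𝕜) := by
  rw [mul_apply, RCLike.ofReal_sum]
  refine Finset.sum_congr rfl fun i _ => ?_
  rw [mul_diagonal, conjTranspose_apply, RCLike.star_def, RCLike.ofReal_mul, RCLike.ofReal_pow,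
    ← RCLike.conj_mul]
  ring

namespace Matrix.IsHermitian

variable {A : Matrix n n 𝕜} (hA : A.IsHermitian)
include hA

protected lemma cfc_id : hA.cfc id = A := by
  rw [← hA.cfc_eq]; exact _root_.cfc_id ℝ A

protected lemma cfc_const_one : hA.cfc (fun _ => 1) = 1 := by
  rw [← hA.cfc_eq]; exact _root_.cfc_const_one ℝ A

lemma trace_cfc (g : ℝ → ℝ) : (hA.cfc g).trace = ((∑ i, g (hA.eigenvalues i) : ℝ) : 𝕜) := by
  rw [IsHermitian.cfc, Unitary.conjStarAlgAut_apply, trace_mul_cycle, Unitary.coe_star_mul_self,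
    one_mul, trace_diagonal, RCLike.ofReal_sum]
  rfl

lemma conjTranspose_mul_cfc_mul_apply_self (g : ℝ → ℝ) (M : Matrix n p 𝕜) (j : p) :
    (Mᴴ * hA.cfc g * M) j j = ((∑ i, g (hA.eigenvalues i) *
      ‖(star (hA.eigenvectorUnitary : Matrix n n 𝕜) * M) i j‖ ^ 2 : ℝ) : 𝕜) := by
  rw [← conjTranspose_mul_diagonal_mul_apply_self, conjTranspose_mul, star_eq_conjTranspose,
    conjTranspose_conjTranspose]
  simp only [IsHermitian.cfc, Unitary.conjStarAlgAut_apply, star_eq_conjTranspose, Matrix.mul_assoc]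
  rfl

lemma sum_conj_cfc_apply_self [Fintype ι] (g : ℝ → ℝ) (M : ι → Matrix n p 𝕜) (j : p) :
    (∑ i, (M i)ᴴ * hA.cfc g * M i) j j = ((∑ q : ι × n, g (hA.eigenvalues q.2) *
      ‖(star (hA.eigenvectorUnitary : Matrix n n 𝕜) * M q.1) q.2 j‖ ^ 2 : ℝ) : 𝕜) := by
  simp only [sum_apply, hA.conjTranspose_mul_cfc_mul_apply_self, Fintype.sum_prod_type,
    RCLike.ofReal_sum]

end Matrix.IsHermitian

theorem ConvexOn.map_diag_sum_conj_le [Fintype ι] [DecidableEq p] {f : ℝ → ℝ}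
    (hf : ConvexOn ℝ Set.univ f) {A : Matrix n n 𝕜} (hA : A.IsHermitian) (M : ι → Matrix n p 𝕜)
    (hM : ∑ i, (M i)ᴴ * M i = 1) (j : p) :
    (f (RCLike.re ((∑ i, (M i)ᴴ * A * M i) j j)) : 𝕜) ≤ (∑ i, (M i)ᴴ * hA.cfc f * M i) j j := by
  set w : ι × n → ℝ := fun q =>
    ‖(star (hA.eigenvectorUnitary : Matrix n n 𝕜) * M q.1) q.2 j‖ ^ 2
  have hw : ∑ q, w q = 1 := by
    have h : (∑ i, (M i)ᴴ * hA.cfc (fun _ => 1) * M i) j j = 1 := by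
      simp only [hA.cfc_const_one, Matrix.mul_one, hM, one_apply_eq]
    rw [hA.sum_conj_cfc_apply_self] at h
    simpa only [one_mul, w] using RCLike.ofReal_injective (K := 𝕜) (h.trans RCLike.ofReal_one.symm)
  have hmean : RCLike.re ((∑ i, (M i)ᴴ * A * M i) j j) = ∑ q, w q • hA.eigenvalues q.2 := by
    conv_lhs => rw [← hA.cfc_id, hA.sum_conj_cfc_apply_self, RCLike.ofReal_re]
    simp only [id, smul_eq_mul, mul_comm, w]
  rw [hA.sum_conj_cfc_apply_self, hmean, RCLike.ofReal_le_ofReal]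
  simpa only [smul_eq_mul, mul_comm] using
    hf.map_sum_le (t := Finset.univ) (fun q _ => by positivity) hw (fun q _ => Set.mem_univ _)

theorem ConvexOn.trace_cfc_le_trace_sum_conj [Fintype p] [DecidableEq p] [Fintype ι]
    {f : ℝ → ℝ} (hf : ConvexOn ℝ Set.univ f)
    {A : Matrix n n 𝕜} (hA : A.IsHermitian) {K : Matrix p p 𝕜} (hK : K.IsHermitian)
    (W : ι → Matrix n p 𝕜) (hW : ∑ i, (W i)ᴴ * W i = 1) (hKW : K = ∑ i, (W i)ᴴ * A * W i) :
    (hK.cfc f).trace ≤ (∑ i, (W i)ᴴ * hA.cfc f * W i).trace := by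
  set V := (hK.eigenvectorUnitary : Matrix p p 𝕜)
  have hV : star V * V = 1 := Unitary.coe_star_mul_self _
  have hV' : V * star V = 1 := Unitary.coe_mul_star_self _
  have conj_V (X : Matrix n n 𝕜) :
      star V * (∑ i, (W i)ᴴ * X * W i) * V = ∑ i, (W i * V)ᴴ * X * (W i * V) := by
    simp only [Finset.mul_sum, Finset.sum_mul, conjTranspose_mul, star_eq_conjTranspose,
      Matrix.mul_assoc]
  have hM : ∑ i, (W i * V)ᴴ * (W i * V) = 1 := by
    simpa only [Matrix.mul_one, hW, hV] using (conj_V 1).symm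
  have hdiag : ∑ i, (W i * V)ᴴ * A * (W i * V) = diagonal (RCLike.ofReal ∘ hK.eigenvalues) := by
    rw [← conj_V, ← hKW, ← hK.conjStarAlgAut_star_eigenvectorUnitary,
      Unitary.conjStarAlgAut_star_apply]
  calc (hK.cfc f).trace
      = ∑ j, (f (RCLike.re ((∑ i, (W i * V)ᴴ * A * (W i * V)) j j)) : 𝕜) := by
        rw [hdiag, hK.trace_cfc, RCLike.ofReal_sum]
        simp only [diagonal_apply_eq, Function.comp_apply, RCLike.ofReal_re]
    _ ≤ ∑ j, (∑ i, (W i * V)ᴴ * hA.cfc f * (W i * V)) j j :=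
        Finset.sum_le_sum fun j _ => hf.map_diag_sum_conj_le hA _ hM j
    _ = (star V * (∑ i, (W i)ᴴ * hA.cfc f * W i) * V).trace := by rw [conj_V]; rfl
    _ = (∑ i, (W i)ᴴ * hA.cfc f * W i).trace := by rw [trace_mul_cycle, hV', Matrix.one_mul]

end Jensen

section PartialTrace

/-- The isometry `v ↦ eᵢ ⊗ v` from `ℂᵐ` into `ℂⁿ ⊗ ℂᵐ`. -/
def singleTensor {n m : ℕ} (i : Fin n) : Matrix (Fin n × Fin m) (Fin m) ℂ :=
  Matrix.of fun q l => if q = (i, l) then 1 else 0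

variable {n m : ℕ}

lemma ptrace1_eq_sum_conj (X : Matrix (Fin n × Fin m) (Fin n × Fin m) ℂ) :
    ptrace1 X = ∑ i : Fin n, (singleTensor (m := m) i)ᴴ * X * singleTensor (m := m) i := by
  ext j l
  simp [ptrace1, singleTensor, Matrix.sum_apply, Matrix.mul_apply]

lemma tensorOne_conjTranspose (a : Matrix (Fin n) (Fin n) ℂ) :
    (tensorOne (m := m) a)ᴴ = tensorOne aᴴ := by
  ext q r
  simp [tensorOne, conjTranspose_apply, eq_comm, apply_ite (star : ℂ → ℂ)]

lemma tensorOne_mul (a b : Matrix (Fin n) (Fin n) ℂ) :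
    tensorOne (m := m) a * tensorOne b = tensorOne (a * b) := by
  ext q r
  simp [tensorOne, mul_apply, Fintype.sum_prod_type]

lemma ptrace1_tensorOne (b : Matrix (Fin n) (Fin n) ℂ) :
    ptrace1 (tensorOne (m := m) b) = b.trace • 1 := by
  ext j l
  simp [ptrace1, tensorOne, trace, one_apply]

lemma trace_ptrace1 (X : Matrix (Fin n × Fin m) (Fin n × Fin m) ℂ) :
    (ptrace1 X).trace = X.trace := by
  simp [ptrace1, trace, Fintype.sum_prod_type, Finset.sum_comm (γ := Fin m)]

lemma trace_ptrace2_mul (X : Matrix (Fin n × Fin m) (Fin n × Fin m) ℂ) (b : Matrix (Fin n) (Fin n) ℂ) :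
    (ptrace2 X * b).trace = (X * tensorOne b).trace := by
  simp only [ptrace2, tensorOne, trace, diag, mul_apply, of_apply, Fintype.sum_prod_type,
    Finset.sum_mul, mul_ite, mul_one, mul_zero, Finset.sum_ite_eq', Finset.mem_univ, if_true]
  exact Finset.sum_congr rfl fun i _ => Finset.sum_comm

lemma ptrace1_conj_eq_sum (T X : Matrix (Fin n × Fin m) (Fin n × Fin m) ℂ) :
    ptrace1 (Tᴴ * X * T) =
      ∑ i : Fin n, (T * singleTensor (m := m) i)ᴴ * X * (T * singleTensor (m := m) i) := by
  simp only [ptrace1_eq_sum_conj, conjTranspose_mul, Matrix.mul_assoc]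

end PartialTrace

theorem trace_jensen_partial_trace_general {n m : ℕ}
    {H : Matrix (Fin n × Fin m) (Fin n × Fin m) ℂ} (hH : H.IsHermitian)
    (f : ℝ → ℝ) (hconv : ConvexOn ℝ Set.univ f)
    (a : Matrix (Fin n) (Fin n) ℂ) (ha : (aᴴ * a).trace = 1) :
    ∃ hK : (ptrace1 (tensorOne aᴴ * H * tensorOne a)).IsHermitian,
      (matFun hK f).trace ≤ (aᴴ * ptrace2 (matFun hH f) * a).trace := by
  set W : Fin n → Matrix (Fin n × Fin m) (Fin m) ℂ := fun i => tensorOne a * singleTensor i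
  have hconj (X : Matrix (Fin n × Fin m) (Fin n × Fin m) ℂ) :
      ptrace1 (tensorOne aᴴ * X * tensorOne a) = ∑ i, (W i)ᴴ * X * W i := by
    rw [← tensorOne_conjTranspose]; exact ptrace1_conj_eq_sum _ _
  have hW : ∑ i, (W i)ᴴ * W i = 1 := by
    simpa only [Matrix.mul_one, tensorOne_mul, ptrace1_tensorOne, ha, one_smul] using
      (hconj 1).symm
  have hK : (ptrace1 (tensorOne aᴴ * H * tensorOne a)).IsHermitian := by
    rw [hconj]
    exact isSelfAdjoint_sum _ fun i _ => isHermitian_conjTranspose_mul_mul _ hH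
  refine ⟨hK, ?_⟩
  calc (matFun hK f).trace ≤ (∑ i, (W i)ᴴ * matFun hH f * W i).trace :=
        hconv.trace_cfc_le_trace_sum_conj hH hK W hW (hconj H)
    _ = (tensorOne aᴴ * matFun hH f * tensorOne a).trace := by rw [← hconj, trace_ptrace1]
    _ = (matFun hH f * tensorOne (a * aᴴ)).trace := by
        rw [trace_mul_cycle, tensorOne_mul, trace_mul_comm]
    _ = (aᴴ * ptrace2 (matFun hH f) * a).trace := by
        rw [← trace_ptrace2_mul, trace_mul_cycle, trace_mul_comm]

/-- **Jensen's inequality for partial traces (normalized case).**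
For `n, m ≥ 1`, a Hermitian `H` on `ℂⁿ ⊗ ℂᵐ`, a continuous convex `f : ℝ → ℝ` and an `n×n`
matrix `a` with `Tr(a* a) = 1`, the matrix `K = Tr₁((a* ⊗ 1) H (a ⊗ 1))` is Hermitian and
`Tr f(K) ≤ Tr(a* · (Tr₂ f(H)) · a)`. -/
theorem trace_jensen_partial_trace {n m : ℕ} (hn : 1 ≤ n) (hm : 1 ≤ m)
    {H : Matrix (Fin n × Fin m) (Fin n × Fin m) ℂ} (hH : H.IsHermitian)
    (f : ℝ → ℝ) (hf : Continuous f) (hconv : ConvexOn ℝ Set.univ f)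
    (a : Matrix (Fin n) (Fin n) ℂ) (ha : (aᴴ * a).trace = 1) :
    ∃ hK : (ptrace1 (tensorOne aᴴ * H * tensorOne a)).IsHermitian,
      (matFun hK f).trace ≤ (aᴴ * ptrace2 (matFun hH f) * a).trace :=
  trace_jensen_partial_trace_general hH f hconv a ha
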